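/- arXiv:2112.08214 — 4 statements merged into one kernel-verified Lean document; each statement's English description precedes it below -/
import Mathlib

section
/- Fix an integer d ≥ 13 and set a₀ := 2/(2 + |κ₊|); fix a ∈ (0, a₀). Let A₀ ≠ 0 and L_∞ ≠ 0 be real constants, let (γ_b)_{b>0} and (ρ_b)_{b>0} be families of functions ℝ → ℝ, and let (ε_b)_{b>0} be positive numbers with ε_b → 0 as b → ∞. Assume that for every T > 0 there exist b_T > 0 and C_T > 0 such that for every b > b_T: (i) |γ_b(T + (a−1)·log b) − A₀ κ₊ b^{aκ₊ − 1} e^{κ₊ T}| ≤ C_T · max{ b^{−2(1−a)−1}, b^{aκ₋ − 1}, b^{2aκ₊ − 1} }; and (ii) |ρ_b(T + (a−1)·log b) − L_∞ e^{κ₋ T} b^{−κ₋(1−a)}| ≤ C_T · max{ ε_b b^{−κ₋(1−a)}, b^{−κ₊(1−a)}, b^{−(2+κ₋)(1−a)} }. Then there exists b₀ > 0 such that for every b > b₀ there is no constant C ∈ ℝ with C·ρ_b(t) = γ_b(t) for all t ∈ ℝ. -/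
open Filter Asymptotics Topology Set

/-- The characteristic exponent `κ₋ = (-(d-4) - √(d²-16d+40))/2`. -/
noncomputable def kappam (d : ℤ) : ℝ :=
  (-((d : ℝ) - 4) - Real.sqrt ((d : ℝ) ^ 2 - 16 * (d : ℝ) + 40)) / 2

/-- The characteristic exponent `κ₊ = (-(d-4) + √(d²-16d+40))/2`. -/
noncomputable def kappap (d : ℤ) : ℝ :=
  (-((d : ℝ) - 4) + Real.sqrt ((d : ℝ) ^ 2 - 16 * (d : ℝ) + 40)) / 2

set_option maxHeartbeats 1000000 in
/-- Lemma 5.1 (Lemma `lemma-1` in the paper): the two solution families `γ_b` and `ρ_b`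
of the homogeneous linearized equation, with the asymptotic representations from
Corollaries 1 and 2, are linearly independent for all large `b`. -/
theorem stmt_6 (d : ℤ) (hd : 13 ≤ d) (a : ℝ)
    (ha : a ∈ Set.Ioo (0 : ℝ) (2 / (2 + |kappap d|)))
    (A₀ LInf : ℝ) (hA₀ : A₀ ≠ 0) (hLInf : LInf ≠ 0)
    (γ ρ : ℝ → ℝ → ℝ) (ε : ℝ → ℝ)
    (hε : ∀ b > (0 : ℝ), 0 < ε b)
    (hεlim : Tendsto ε atTop (𝓝 0))
    (hyp : ∀ T > (0 : ℝ), ∃ bT > (0 : ℝ), ∃ CT > (0 : ℝ), ∀ b > bT,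
      |γ b (T + (a - 1) * Real.log b)
          - A₀ * kappap d * b ^ (a * kappap d - 1) * Real.exp (kappap d * T)|
        ≤ CT * max (b ^ (-2 * (1 - a) - 1))
            (max (b ^ (a * kappam d - 1)) (b ^ (2 * a * kappap d - 1))) ∧
      |ρ b (T + (a - 1) * Real.log b)
          - LInf * Real.exp (kappam d * T) * b ^ (-(kappam d) * (1 - a))|
        ≤ CT * max (ε b * b ^ (-(kappam d) * (1 - a)))
            (max (b ^ (-(kappap d) * (1 - a))) (b ^ (-(2 + kappam d) * (1 - a))))) :
    ∃ b₀ > (0 : ℝ), ∀ b > b₀, ¬ ∃ C : ℝ, ∀ t : ℝ, C * ρ b t = γ b t := by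
  obtain ⟨ha0, ha2⟩ := ha
  set p := kappap d with hpdef
  set m := kappam d with hmdef
  have hd13 : (13 : ℝ) ≤ (d : ℝ) := by exact_mod_cast hd
  have hdisc : (0 : ℝ) < (d : ℝ) ^ 2 - 16 * (d : ℝ) + 40 := by nlinarith
  have hs0 : 0 < Real.sqrt ((d : ℝ) ^ 2 - 16 * (d : ℝ) + 40) := Real.sqrt_pos.mpr hdisc
  have hslt : Real.sqrt ((d : ℝ) ^ 2 - 16 * (d : ℝ) + 40) < (d : ℝ) - 4 := by
    rw [Real.sqrt_lt' (by linarith)]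
    nlinarith
  have hp0 : p < 0 := by
    rw [hpdef, kappap]; linarith
  have hmp : m < p := by
    rw [hpdef, hmdef, kappap, kappam]; linarith
  have hm0 : m < 0 := lt_trans hmp hp0
  have h2p : (0 : ℝ) < 2 - p := by linarith
  have ha2' : a * (2 - p) < 2 := by
    rw [abs_of_neg hp0] at ha2
    rw [show (2 : ℝ) + -p = 2 - p by ring] at ha2
    exact (lt_div_iff₀ h2p).mp ha2
  have ha1 : a < 1 := by nlinarith
  -- get the two hypotheses at T = 1 and T = 2
  obtain ⟨b1, hb1pos, C1, hC1, H1⟩ := hyp 1 one_pos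
  obtain ⟨b2, hb2pos, C2, hC2, H2⟩ := hyp 2 two_pos
  set Cm : ℝ := max C1 C2 with hCmdef
  have hCm : 0 < Cm := lt_of_lt_of_le hC1 (le_max_left _ _)
  -- the main coefficient
  set E : ℝ := Real.exp (p * 1) * Real.exp (m * 2) - Real.exp (p * 2) * Real.exp (m * 1)
    with hEdef
  have hEne : E ≠ 0 := by
    rw [hEdef, sub_ne_zero, ← Real.exp_add, ← Real.exp_add]
    intro h
    have := Real.exp_injective h
    linarith
  set c₀ : ℝ := |A₀ * p * LInf * E| with hc₀def
  have hc₀ : 0 < c₀ := by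
    rw [hc₀def, abs_pos]
    have hpne : p ≠ 0 := ne_of_lt hp0
    exact mul_ne_zero (mul_ne_zero (mul_ne_zero hA₀ hpne) hLInf) hEne
  set S : ℝ := 2 * Cm * (|A₀ * p| + |LInf| + Cm) with hSdef
  have hS0 : 0 < S := by
    have h1 : 0 ≤ |A₀ * p| := abs_nonneg _
    have h2 : 0 ≤ |LInf| := abs_nonneg _
    rw [hSdef]; nlinarith
  set δ : ℝ := min 1 (c₀ / (S + 1)) with hδdef
  have hδ0 : 0 < δ := lt_min one_pos (div_pos hc₀ (by linarith))
  have hδ1 : δ ≤ 1 := min_le_left _ _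
  have hδS : δ * S < c₀ := by
    have h1 : δ ≤ c₀ / (S + 1) := min_le_right _ _
    have h2 : δ * (S + 1) ≤ c₀ := by
      rw [← le_div_iff₀ (by linarith)]; exact h1
    nlinarith
  -- eventual smallness of all error terms
  have hneg : ∀ (e : ℝ), e < 0 → ∀ᶠ b in atTop, (b : ℝ) ^ e < δ := by
    intro e he
    have : Tendsto (fun b : ℝ => b ^ e) atTop (𝓝 0) := by
      have := tendsto_rpow_neg_atTop (y := -e) (by linarith)
      simpa using this
    exact this.eventually_lt_const hδ0
  have he1 : a * (2 - p) - 2 < 0 := by linarith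
  have he2 : a * (m - p) < 0 := mul_neg_of_pos_of_neg ha0 (by linarith)
  have he3 : a * p < 0 := mul_neg_of_pos_of_neg ha0 hp0
  have he4 : (m - p) * (1 - a) < 0 := mul_neg_of_neg_of_pos (by linarith) (by linarith)
  have he5 : -2 * (1 - a) < 0 := by nlinarith
  have hev : ∀ᶠ b in atTop, (1 : ℝ) < b ∧ b1 < b ∧ b2 < b ∧
      b ^ (a * (2 - p) - 2) < δ ∧ b ^ (a * (m - p)) < δ ∧ b ^ (a * p) < δ ∧
      b ^ ((m - p) * (1 - a)) < δ ∧ b ^ (-2 * (1 - a)) < δ ∧ ε b < δ := by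
    refine (eventually_gt_atTop 1).and <| (eventually_gt_atTop b1).and <|
      (eventually_gt_atTop b2).and <| (hneg _ he1).and <| (hneg _ he2).and <|
      (hneg _ he3).and <| (hneg _ he4).and <| (hneg _ he5).and ?_
    exact hεlim.eventually_lt_const hδ0
  rw [eventually_atTop] at hev
  obtain ⟨b₀, hb₀⟩ := hev
  refine ⟨max b₀ 1, lt_of_lt_of_le one_pos (le_max_right _ _), ?_⟩
  intro b hb
  obtain ⟨hb1', hbb1, hbb2, hE1, hE2, hE3, hE4, hE5, hEε⟩ :=
    hb₀ b (le_of_lt (lt_of_le_of_lt (le_max_left _ _) hb))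
  have hb0 : (0 : ℝ) < b := lt_trans one_pos hb1'
  rintro ⟨C, hC⟩
  -- the relevant values
  obtain ⟨hγ1, hρ1⟩ := H1 b hbb1
  obtain ⟨hγ2, hρ2⟩ := H2 b hbb2
  set BP : ℝ := b ^ (a * p - 1) with hBPdef
  set BM : ℝ := b ^ (-m * (1 - a)) with hBMdef
  have hBP0 : 0 < BP := Real.rpow_pos_of_pos hb0 _
  have hBM0 : 0 < BM := Real.rpow_pos_of_pos hb0 _
  -- bound the error maxima
  have hmaxγ : max (b ^ (-2 * (1 - a) - 1))
      (max (b ^ (a * m - 1)) (b ^ (2 * a * p - 1))) ≤ δ * BP := by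
    have key : ∀ e : ℝ, b ^ (e - (a * p - 1)) < δ → b ^ e ≤ δ * BP := by
      intro e h
      have : b ^ e = b ^ (e - (a * p - 1)) * BP := by
        rw [hBPdef, ← Real.rpow_add hb0]; ring_nf
      rw [this]
      exact le_of_lt (mul_lt_mul_of_pos_right h hBP0)
    refine max_le (key _ ?_) (max_le (key _ ?_) (key _ ?_))
    · rw [show -2 * (1 - a) - 1 - (a * p - 1) = a * (2 - p) - 2 by ring]; exact hE1
    · rw [show a * m - 1 - (a * p - 1) = a * (m - p) by ring]; exact hE2
    · rw [show 2 * a * p - 1 - (a * p - 1) = a * p by ring]; exact hE3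
  have hmaxρ : max (ε b * b ^ (-m * (1 - a)))
      (max (b ^ (-p * (1 - a))) (b ^ (-(2 + m) * (1 - a)))) ≤ δ * BM := by
    have key : ∀ e : ℝ, b ^ (e - (-m * (1 - a))) < δ → b ^ e ≤ δ * BM := by
      intro e h
      have : b ^ e = b ^ (e - (-m * (1 - a))) * BM := by
        rw [hBMdef, ← Real.rpow_add hb0]; ring_nf
      rw [this]
      exact le_of_lt (mul_lt_mul_of_pos_right h hBM0)
    refine max_le ?_ (max_le (key _ ?_) (key _ ?_))
    · rw [← hBMdef]
      exact le_of_lt (mul_lt_mul_of_pos_right hEε hBM0)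
    · rw [show -p * (1 - a) - (-m * (1 - a)) = (m - p) * (1 - a) by ring]; exact hE4
    · rw [show -(2 + m) * (1 - a) - (-m * (1 - a)) = -2 * (1 - a) by ring]; exact hE5
  -- the four approximate values
  set G1 : ℝ := γ b (1 + (a - 1) * Real.log b) with hG1def
  set G2 : ℝ := γ b (2 + (a - 1) * Real.log b) with hG2def
  set R1 : ℝ := ρ b (1 + (a - 1) * Real.log b) with hR1def
  set R2 : ℝ := ρ b (2 + (a - 1) * Real.log b) with hR2def
  have hCle1 : C1 ≤ Cm := le_max_left _ _
  have hCle2 : C2 ≤ Cm := le_max_right _ _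
  have hδBP0 : (0:ℝ) ≤ δ * BP := le_of_lt (mul_pos hδ0 hBP0)
  have hδBM0 : (0:ℝ) ≤ δ * BM := le_of_lt (mul_pos hδ0 hBM0)
  have hmγ0 : (0:ℝ) ≤ max (b ^ (-2 * (1 - a) - 1))
      (max (b ^ (a * m - 1)) (b ^ (2 * a * p - 1))) :=
    le_trans (Real.rpow_pos_of_pos hb0 _).le (le_max_left _ _)
  have hmρ0 : (0:ℝ) ≤ max (ε b * b ^ (-m * (1 - a)))
      (max (b ^ (-p * (1 - a))) (b ^ (-(2 + m) * (1 - a)))) :=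
    le_trans (Real.rpow_pos_of_pos hb0 _).le
      (le_trans (le_max_left _ _) (le_max_right _ _))
  have hu1 : |G1 - A₀ * p * b ^ (a * p - 1) * Real.exp (p * 1)| ≤ Cm * (δ * BP) :=
    le_trans hγ1 (mul_le_mul hCle1 hmaxγ hmγ0 hCm.le)
  have hu2 : |G2 - A₀ * p * b ^ (a * p - 1) * Real.exp (p * 2)| ≤ Cm * (δ * BP) :=
    le_trans hγ2 (mul_le_mul hCle2 hmaxγ hmγ0 hCm.le)
  have hv1 : |R1 - LInf * Real.exp (m * 1) * b ^ (-m * (1 - a))| ≤ Cm * (δ * BM) :=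
    le_trans hρ1 (mul_le_mul hCle1 hmaxρ hmρ0 hCm.le)
  have hv2 : |R2 - LInf * Real.exp (m * 2) * b ^ (-m * (1 - a))| ≤ Cm * (δ * BM) :=
    le_trans hρ2 (mul_le_mul hCle2 hmaxρ hmρ0 hCm.le)
  rw [← hBPdef] at hu1 hu2
  rw [← hBMdef] at hv1 hv2
  -- from the proportionality, G1 * R2 = G2 * R1
  have hkey : G1 * R2 = G2 * R1 := by
    have h1 : C * R1 = G1 := hC _
    have h2 : C * R2 = G2 := hC _
    rw [← h1, ← h2]; ring
  -- introduce the errors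
  set u1 : ℝ := G1 - A₀ * p * BP * Real.exp (p * 1) with hu1def
  set u2 : ℝ := G2 - A₀ * p * BP * Real.exp (p * 2) with hu2def
  set v1 : ℝ := R1 - LInf * Real.exp (m * 1) * BM with hv1def
  set v2 : ℝ := R2 - LInf * Real.exp (m * 2) * BM with hv2def
  -- the main identity
  have hmain : A₀ * p * LInf * E * (BP * BM) =
      (A₀ * p * BP * Real.exp (p * 2) * v1 + u2 * (LInf * Real.exp (m * 1) * BM) + u2 * v1)
      - (A₀ * p * BP * Real.exp (p * 1) * v2 + u1 * (LInf * Real.exp (m * 2) * BM) + u1 * v2)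
      := by
    have hG1 : G1 = A₀ * p * BP * Real.exp (p * 1) + u1 := by rw [hu1def]; ring
    have hG2 : G2 = A₀ * p * BP * Real.exp (p * 2) + u2 := by rw [hu2def]; ring
    have hR1 : R1 = LInf * Real.exp (m * 1) * BM + v1 := by rw [hv1def]; ring
    have hR2 : R2 = LInf * Real.exp (m * 2) * BM + v2 := by rw [hv2def]; ring
    rw [hG1, hG2, hR1, hR2] at hkey
    rw [hEdef]
    linear_combination hkey
  -- bound each of the six error products
  have hexp1 : Real.exp (p * 1) ≤ 1 := Real.exp_le_one_iff.mpr (by linarith)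
  have hexp2 : Real.exp (p * 2) ≤ 1 := Real.exp_le_one_iff.mpr (by linarith)
  have hexpm1 : Real.exp (m * 1) ≤ 1 := Real.exp_le_one_iff.mpr (by linarith)
  have hexpm2 : Real.exp (m * 2) ≤ 1 := Real.exp_le_one_iff.mpr (by linarith)
  have hgb : ∀ T : ℝ, Real.exp (p * T) ≤ 1 →
      |A₀ * p * BP * Real.exp (p * T)| ≤ |A₀ * p| * BP := by
    intro T hT
    rw [abs_mul, abs_mul, abs_of_pos hBP0,
      abs_of_pos (Real.exp_pos _)]
    calc |A₀ * p| * BP * Real.exp (p * T) ≤ |A₀ * p| * BP * 1 := by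
          exact mul_le_mul_of_nonneg_left hT (by positivity)
      _ = |A₀ * p| * BP := by ring
  have hrb : ∀ T : ℝ, Real.exp (m * T) ≤ 1 →
      |LInf * Real.exp (m * T) * BM| ≤ |LInf| * BM := by
    intro T hT
    rw [abs_mul, abs_mul, abs_of_pos hBM0, abs_of_pos (Real.exp_pos _)]
    calc |LInf| * Real.exp (m * T) * BM ≤ |LInf| * 1 * BM := by
          exact mul_le_mul_of_nonneg_right
            (mul_le_mul_of_nonneg_left hT (abs_nonneg _)) hBM0.le
      _ = |LInf| * BM := by ring
  -- final contradiction
  have habs : c₀ * (BP * BM) ≤ δ * S * (BP * BM) := by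
    have h1 : c₀ * (BP * BM) = |A₀ * p * LInf * E * (BP * BM)| := by
      rw [abs_mul, ← hc₀def, abs_of_pos (mul_pos hBP0 hBM0)]
    rw [h1, hmain]
    have t1 : |A₀ * p * BP * Real.exp (p * 2) * v1| ≤ (|A₀ * p| * BP) * (Cm * (δ * BM)) := by
      rw [abs_mul]
      exact mul_le_mul (hgb 2 hexp2) hv1 (abs_nonneg _) (by positivity)
    have t2 : |u2 * (LInf * Real.exp (m * 1) * BM)| ≤ (Cm * (δ * BP)) * (|LInf| * BM) := by
      rw [abs_mul]
      exact mul_le_mul hu2 (hrb 1 hexpm1) (abs_nonneg _) (by positivity)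
    have t3 : |u2 * v1| ≤ (Cm * (δ * BP)) * (Cm * (δ * BM)) := by
      rw [abs_mul]
      exact mul_le_mul hu2 hv1 (abs_nonneg _) (by positivity)
    have t4 : |A₀ * p * BP * Real.exp (p * 1) * v2| ≤ (|A₀ * p| * BP) * (Cm * (δ * BM)) := by
      rw [abs_mul]
      exact mul_le_mul (hgb 1 hexp1) hv2 (abs_nonneg _) (by positivity)
    have t5 : |u1 * (LInf * Real.exp (m * 2) * BM)| ≤ (Cm * (δ * BP)) * (|LInf| * BM) := by
      rw [abs_mul]
      exact mul_le_mul hu1 (hrb 2 hexpm2) (abs_nonneg _) (by positivity)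
    have t6 : |u1 * v2| ≤ (Cm * (δ * BP)) * (Cm * (δ * BM)) := by
      rw [abs_mul]
      exact mul_le_mul hu1 hv2 (abs_nonneg _) (by positivity)
    have tri : |(A₀ * p * BP * Real.exp (p * 2) * v1 + u2 * (LInf * Real.exp (m * 1) * BM)
        + u2 * v1) - (A₀ * p * BP * Real.exp (p * 1) * v2
        + u1 * (LInf * Real.exp (m * 2) * BM) + u1 * v2)|
        ≤ |A₀ * p * BP * Real.exp (p * 2) * v1| + |u2 * (LInf * Real.exp (m * 1) * BM)|
          + |u2 * v1| + |A₀ * p * BP * Real.exp (p * 1) * v2|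
          + |u1 * (LInf * Real.exp (m * 2) * BM)| + |u1 * v2| := by
      calc _ ≤ |A₀ * p * BP * Real.exp (p * 2) * v1 + u2 * (LInf * Real.exp (m * 1) * BM)
            + u2 * v1| + |A₀ * p * BP * Real.exp (p * 1) * v2
            + u1 * (LInf * Real.exp (m * 2) * BM) + u1 * v2| := abs_sub _ _
        _ ≤ _ := by
            have := abs_add_le (A₀ * p * BP * Real.exp (p * 2) * v1
              + u2 * (LInf * Real.exp (m * 1) * BM)) (u2 * v1)
            have := abs_add_le (A₀ * p * BP * Real.exp (p * 2) * v1)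
              (u2 * (LInf * Real.exp (m * 1) * BM))
            have := abs_add_le (A₀ * p * BP * Real.exp (p * 1) * v2
              + u1 * (LInf * Real.exp (m * 2) * BM)) (u1 * v2)
            have := abs_add_le (A₀ * p * BP * Real.exp (p * 1) * v2)
              (u1 * (LInf * Real.exp (m * 2) * BM))
            linarith
    have hsum : (|A₀ * p| * BP) * (Cm * (δ * BM)) + (Cm * (δ * BP)) * (|LInf| * BM)
        + (Cm * (δ * BP)) * (Cm * (δ * BM)) + (|A₀ * p| * BP) * (Cm * (δ * BM))
        + (Cm * (δ * BP)) * (|LInf| * BM) + (Cm * (δ * BP)) * (Cm * (δ * BM))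
        ≤ δ * S * (BP * BM) := by
      have hq2 : Cm * Cm * (δ * δ) ≤ Cm * Cm * δ := by
        have hdd : δ * δ ≤ δ := by
          calc δ * δ ≤ 1 * δ := mul_le_mul_of_nonneg_right hδ1 hδ0.le
            _ = δ := one_mul δ
        exact mul_le_mul_of_nonneg_left hdd (by positivity)
      have hcoef : 2 * (Cm * δ) * (|A₀ * p| + |LInf|) + 2 * (Cm * Cm) * (δ * δ)
          ≤ δ * (2 * Cm * (|A₀ * p| + |LInf| + Cm)) := by linarith
      calc (|A₀ * p| * BP) * (Cm * (δ * BM)) + (Cm * (δ * BP)) * (|LInf| * BM)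
            + (Cm * (δ * BP)) * (Cm * (δ * BM)) + (|A₀ * p| * BP) * (Cm * (δ * BM))
            + (Cm * (δ * BP)) * (|LInf| * BM) + (Cm * (δ * BP)) * (Cm * (δ * BM))
          = (2 * (Cm * δ) * (|A₀ * p| + |LInf|) + 2 * (Cm * Cm) * (δ * δ)) * (BP * BM) := by
            ring
        _ ≤ (δ * (2 * Cm * (|A₀ * p| + |LInf| + Cm))) * (BP * BM) :=
            mul_le_mul_of_nonneg_right hcoef (by positivity)
        _ = δ * S * (BP * BM) := by rw [hSdef]
    linarith [tri, t1, t2, t3, t4, t5, t6, hsum]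
  have : δ * S * (BP * BM) < c₀ * (BP * BM) :=
    mul_lt_mul_of_pos_right hδS (mul_pos hBP0 hBM0)
  linarith
end

section
/- Fix an integer d ≥ 13, a ∈ (0,1), and a constant L_∞ ≠ 0, and write t₀(b) := (a−1)·log b. Suppose that for each b > 0 there are a continuous function q_b : ℝ → ℝ and C² solutions γ_b, Φ_b, ρ_b : ℝ → ℝ of the linear equation γ''(t) + (d−4)γ'(t) + q_b(t)γ(t) = 0, satisfying: (i) there exist b-independent constants C★ > 0 and τ★ ∈ ℝ such that for all t ≤ τ★ and all b, |γ_b(t) − e^t| ≤ C★e^{3t}, |γ_b'(t) − e^t| ≤ C★e^{3t}, |Φ_b(t) − (2−d)^{-1}e^{(3−d)t}| ≤ C★e^{(5−d)t}, and |Φ_b'(t) − (3−d)(2−d)^{-1}e^{(3−d)t}| ≤ C★e^{(5−d)t}; (ii) γ_b(t)Φ_b'(t) − γ_b'(t)Φ_b(t) = e^{(4−d)t} for all t; (iii) ρ_b(t₀(b)) = L_∞ e^{κ₋ t₀(b)}(1 + η_b) and ρ_b'(t₀(b)) = L_∞ κ₋ e^{κ₋ t₀(b)}(1 + η̃_b),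 where η_b → 0 and η̃_b → 0 as b → ∞. Then there exists b₀ > 0 such that for every b > b₀, the infimum over t ∈ (−∞, t₀(b)] of |ρ_b(t)| is strictly positive; in particular ρ_b has no zeros on (−∞, t₀(b)], and the sign of ρ_b(t) there coincides with the sign of L_∞. -/
open Filter Asymptotics Topology Set

/-!
For any two solutions `u, v` the Wronskian `W(u, v)` times `e^{(d-4)t}` is constant, and
`W(γ_b, Φ_b) = e^{(4-d)t}`; so `ρ_b = α γ_b + β Φ_b`, with `α, β` read off from Wronskians of
`ρ_b` at `T = t₀(b)`. In terms of the normalised profiles `G = e^{-t} γ_b → 1` and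
`F = e^{(d-3)t} Φ_b → (2-d)⁻¹ < 0`, which converge uniformly on `(-∞, T]` as `b → ∞`, this reads
`ρ_b(t) = L_∞ e^{κ₋T} (e^{t-T} G(t) A_b + e^{(d-3)(T-t)} F(t) B_b)`
with `A_b → (κ₋ + d - 3)/(d - 2) > 0` and `B_b → κ₋ - 1 < 0`. For large `b` the first term is
nonnegative and the second is at least `(1 - κ₋)/(4(d - 2))`, since `e^{(d-3)(T-t)} ≥ 1`.
-/

theorem kappam_lt_one {d : ℤ} (hd : 2 < d) : kappam d < 1 := by
  have : (2 : ℝ) < d := by exact_mod_cast hd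
  have := Real.sqrt_nonneg ((d : ℝ) ^ 2 - 16 * (d : ℝ) + 40)
  unfold kappam
  linarith

theorem kappam_add_sub_three_pos {d : ℤ} (hd : 3 < d) : 0 < kappam d + d - 3 := by
  have hd' : (3 : ℝ) < d := by exact_mod_cast hd
  have : Real.sqrt ((d : ℝ) ^ 2 - 16 * (d : ℝ) + 40) < d - 2 :=
    (Real.sqrt_lt' (by linarith)).2 (by nlinarith)
  unfold kappam
  linarith

noncomputable def wronskian (u v : ℝ → ℝ) (t : ℝ) : ℝ := u t * deriv v t - deriv u t * v t

section LinearODE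

open Real

variable {c : ℝ} {q u v w : ℝ → ℝ}

theorem wronskian_mul_exp_eq (hu : ContDiff ℝ 2 u) (hv : ContDiff ℝ 2 v)
    (hueq : ∀ t, deriv (deriv u) t + c * deriv u t + q t * u t = 0)
    (hveq : ∀ t, deriv (deriv v) t + c * deriv v t + q t * v t = 0) (x y : ℝ) :
    wronskian u v x * exp (c * x) = wronskian u v y * exp (c * y) := by
  have hderiv (t : ℝ) : HasDerivAt (fun t => wronskian u v t * exp (c * t)) 0 t := by
    have h := ((((hu.differentiable two_ne_zero t).hasDerivAt.mul
      (hv.differentiable_deriv_two t).hasDerivAt).sub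
      ((hu.differentiable_deriv_two t).hasDerivAt.mul
        (hv.differentiable two_ne_zero t).hasDerivAt)).mul
      ((hasDerivAt_id t).const_mul c).exp)
    refine h.congr_deriv ?_
    simp only [id_eq, mul_one, Pi.sub_apply, Pi.mul_apply]
    linear_combination (exp (c * t) * u t) * hveq t - (exp (c * t) * v t) * hueq t
  exact is_const_of_deriv_eq_zero (fun t => (hderiv t).differentiableAt)
    (fun t => (hderiv t).deriv) x y

theorem eq_wronskian_combination (hu : ContDiff ℝ 2 u) (hv : ContDiff ℝ 2 v)
    (hw : ContDiff ℝ 2 w)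
    (hueq : ∀ t, deriv (deriv u) t + c * deriv u t + q t * u t = 0)
    (hveq : ∀ t, deriv (deriv v) t + c * deriv v t + q t * v t = 0)
    (hweq : ∀ t, deriv (deriv w) t + c * deriv w t + q t * w t = 0)
    (huv : ∀ t, wronskian u v t * exp (c * t) = 1) (t T : ℝ) :
    w t = wronskian w v T * exp (c * T) * u t + wronskian u w T * exp (c * T) * v t := by
  rw [← wronskian_mul_exp_eq hw hv hweq hveq t, ← wronskian_mul_exp_eq hu hw hueq hweq t]
  unfold wronskian at huv ⊢
  linear_combination (-w t) * huv t

end LinearODE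

noncomputable def expScaled (s : ℝ) (f : ℝ → ℝ) (t : ℝ) : ℝ := f t * Real.exp (-(s * t))

section Asymptotics

open Real

theorem abs_expScaled_sub_le {s c C t : ℝ} {f : ℝ → ℝ}
    (h : |f t - c * exp (s * t)| ≤ C * exp ((s + 2) * t)) :
    |expScaled s f t - c| ≤ C * exp (2 * t) := by
  have hpos := exp_pos (-(s * t))
  have e : expScaled s f t - c = (f t - c * exp (s * t)) * exp (-(s * t)) := by
    rw [expScaled, sub_mul, mul_assoc, ← exp_add, add_neg_cancel, exp_zero, mul_one]
  rw [e, abs_mul, abs_of_pos hpos]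
  calc |f t - c * exp (s * t)| * exp (-(s * t)) ≤ C * exp ((s + 2) * t) * exp (-(s * t)) := by
        gcongr
    _ = C * exp (2 * t) := by rw [mul_assoc, ← exp_add]; ring_nf

theorem abs_expScaled_sub_le_of_estimates {d C t : ℝ} {γ Φ : ℝ → ℝ}
    (h : |γ t - exp t| ≤ C * exp (3 * t) ∧ |deriv γ t - exp t| ≤ C * exp (3 * t) ∧
      |Φ t - (2 - d)⁻¹ * exp ((3 - d) * t)| ≤ C * exp ((5 - d) * t) ∧
      |deriv Φ t - (3 - d) * (2 - d)⁻¹ * exp ((3 - d) * t)| ≤ C * exp ((5 - d) * t)) :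
    |expScaled 1 γ t - 1| ≤ C * exp (2 * t) ∧ |expScaled 1 (deriv γ) t - 1| ≤ C * exp (2 * t) ∧
      |expScaled (3 - d) Φ t - (2 - d)⁻¹| ≤ C * exp (2 * t) ∧
      |expScaled (3 - d) (deriv Φ) t - (3 - d) * (2 - d)⁻¹| ≤ C * exp (2 * t) := by
  obtain ⟨hγ, hγ', hΦ, hΦ'⟩ := h
  have e : (5 - d) * t = (3 - d + 2) * t := by ring
  rw [e] at hΦ hΦ'
  refine ⟨abs_expScaled_sub_le ?_, abs_expScaled_sub_le ?_, abs_expScaled_sub_le hΦ,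
    abs_expScaled_sub_le hΦ'⟩ <;> norm_num <;> assumption

theorem eventually_forall_le_abs_sub_le {ι : Type*} {l : Filter ι} {T : ι → ℝ}
    (hT : Tendsto T l atBot) {g : ι → ℝ → ℝ} {ℓ C τ ε : ℝ} (hC : 0 ≤ C)
    (hg : ∀ᶠ i in l, ∀ t ≤ τ, |g i t - ℓ| ≤ C * exp (2 * t)) (hε : 0 < ε) :
    ∀ᶠ i in l, ∀ t ≤ T i, |g i t - ℓ| ≤ ε := by
  have hsmall : Tendsto (fun i => C * exp (2 * T i)) l (𝓝 0) := by
    simpa using (tendsto_exp_atBot.comp (hT.const_mul_atBot two_pos)).const_mul C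
  filter_upwards [hg, hT.eventually (eventually_le_atBot τ), hsmall.eventually_le_const hε]
    with i hgi hTi hCi t ht
  calc |g i t - ℓ| ≤ C * exp (2 * t) := hgi t (ht.trans hTi)
    _ ≤ C * exp (2 * T i) := by gcongr
    _ ≤ ε := hCi

theorem tendsto_apply_of_abs_sub_le {ι : Type*} {l : Filter ι} {T : ι → ℝ}
    (hT : Tendsto T l atBot) {g : ι → ℝ → ℝ} {ℓ C τ : ℝ} (hC : 0 ≤ C)
    (hg : ∀ᶠ i in l, ∀ t ≤ τ, |g i t - ℓ| ≤ C * exp (2 * t)) :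
    Tendsto (fun i => g i (T i)) l (𝓝 ℓ) :=
  Metric.tendsto_nhds.2 fun ε hε =>
    (eventually_forall_le_abs_sub_le hT hC hg (half_pos hε)).mono fun i h => by
      rw [Real.dist_eq]; exact (h (T i) le_rfl).trans_lt (half_lt_self hε)

end Asymptotics

-- Normalised coefficients of `γ` (the solution regular at `t = -∞`) and of `Φ` in `ρ`, when
-- `ρ(T) = L e^{κT} r` and `ρ'(T) = L κ e^{κT} r'`.
noncomputable def regularCoeff (d κ : ℝ) (Φ : ℝ → ℝ) (T r r' : ℝ) : ℝ :=
  expScaled (3 - d) (deriv Φ) T * r - κ * expScaled (3 - d) Φ T * r'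

noncomputable def singularCoeff (κ : ℝ) (γ : ℝ → ℝ) (T r r' : ℝ) : ℝ :=
  κ * expScaled 1 γ T * r' - expScaled 1 (deriv γ) T * r

section Representation

open Real

theorem eq_mul_exp_mul_coeffs {d κ L T r r' : ℝ} {γ Φ ρ : ℝ → ℝ}
    (hρ : ∀ t, ρ t = wronskian ρ Φ T * exp ((d - 4) * T) * γ t +
      wronskian γ ρ T * exp ((d - 4) * T) * Φ t)
    (hT : ρ T = L * exp (κ * T) * r) (hT' : deriv ρ T = L * κ * exp (κ * T) * r') (t : ℝ) :
    ρ t = L * (exp (κ * T) * (exp (t - T) * (expScaled 1 γ t * regularCoeff d κ Φ T r r') +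
      exp ((d - 3) * (T - t)) * (expScaled (3 - d) Φ t * singularCoeff κ γ T r r'))) := by
  have h1 : exp (t - T) * exp (-(1 * t)) * exp (-((3 - d) * T)) = exp ((d - 4) * T) := by
    rw [← exp_add, ← exp_add]; ring_nf
  have h2 : exp ((d - 3) * (T - t)) * exp (-((3 - d) * t)) * exp (-(1 * T)) =
      exp ((d - 4) * T) := by
    rw [← exp_add, ← exp_add]; ring_nf
  rw [hρ t]
  simp only [wronskian, expScaled, regularCoeff, singularCoeff, hT, hT']
  linear_combination (-(L * exp (κ * T) * γ t * (deriv Φ T * r - κ * Φ T * r'))) * h1 -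
    (L * exp (κ * T) * Φ t * (κ * γ T * r' - deriv γ T * r)) * h2

end Representation

section Coefficients

variable {ι : Type*} {l : Filter ι} {T r r' : ι → ℝ}

theorem tendsto_regularCoeff {d κ ℓ₀ ℓ₁ : ℝ} {Φ : ι → ℝ → ℝ}
    (hΦ : Tendsto (fun i => expScaled (3 - d) (Φ i) (T i)) l (𝓝 ℓ₀))
    (hΦ' : Tendsto (fun i => expScaled (3 - d) (deriv (Φ i)) (T i)) l (𝓝 ℓ₁))
    (hr : Tendsto r l (𝓝 1)) (hr' : Tendsto r' l (𝓝 1)) :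
    Tendsto (fun i => regularCoeff d κ (Φ i) (T i) (r i) (r' i)) l (𝓝 (ℓ₁ - κ * ℓ₀)) := by
  unfold regularCoeff
  simpa using (hΦ'.mul hr).sub ((hΦ.const_mul κ).mul hr')

theorem tendsto_singularCoeff {κ g₀ g₁ : ℝ} {γ : ι → ℝ → ℝ}
    (hγ : Tendsto (fun i => expScaled 1 (γ i) (T i)) l (𝓝 g₀))
    (hγ' : Tendsto (fun i => expScaled 1 (deriv (γ i)) (T i)) l (𝓝 g₁))
    (hr : Tendsto r l (𝓝 1)) (hr' : Tendsto r' l (𝓝 1)) :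
    Tendsto (fun i => singularCoeff κ (γ i) (T i) (r i) (r' i)) l (𝓝 (κ * g₀ - g₁)) := by
  unfold singularCoeff
  simpa using ((hγ.const_mul κ).mul hr').sub (hγ'.mul hr)

end Coefficients

section LowerBound

open Real

theorem le_exp_sub_mul_add_exp_mul {s t T P Q m : ℝ} (ht : t ≤ T) (hs : 0 ≤ s) (hP : 0 ≤ P)
    (hm : 0 ≤ m) (hQ : m ≤ Q) : m ≤ exp (t - T) * P + exp (s * (T - t)) * Q := by
  have h1 : 1 ≤ exp (s * (T - t)) := one_le_exp (mul_nonneg hs (sub_nonneg.2 ht))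
  calc m ≤ Q := hQ
    _ ≤ exp (s * (T - t)) * Q := le_mul_of_one_le_left (hm.trans hQ) h1
    _ ≤ exp (t - T) * P + exp (s * (T - t)) * Q :=
        le_add_of_nonneg_left (mul_nonneg (exp_pos _).le hP)

theorem exists_ge_eq_mul_of_coeff_bounds {d κ L T r r' m n : ℝ} {q γ Φ ρ : ℝ → ℝ}
    (hd : 3 ≤ d) (hγ : ContDiff ℝ 2 γ) (hΦ : ContDiff ℝ 2 Φ) (hρ : ContDiff ℝ 2 ρ)
    (hγeq : ∀ t, deriv (deriv γ) t + (d - 4) * deriv γ t + q t * γ t = 0)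
    (hΦeq : ∀ t, deriv (deriv Φ) t + (d - 4) * deriv Φ t + q t * Φ t = 0)
    (hρeq : ∀ t, deriv (deriv ρ) t + (d - 4) * deriv ρ t + q t * ρ t = 0)
    (hW : ∀ t, wronskian γ Φ t * exp ((d - 4) * t) = 1)
    (hT : ρ T = L * exp (κ * T) * r) (hT' : deriv ρ T = L * κ * exp (κ * T) * r')
    (hγT : ∀ t ≤ T, 0 ≤ expScaled 1 γ t) (hΦT : ∀ t ≤ T, expScaled (3 - d) Φ t ≤ -m)
    (hA : 0 ≤ regularCoeff d κ Φ T r r') (hB : singularCoeff κ γ T r r' ≤ -n)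
    (hm : 0 ≤ m) (hn : 0 ≤ n) :
    ∀ t ≤ T, ∃ x ≥ exp (κ * T) * (m * n), ρ t = L * x := fun t ht =>
  ⟨_, mul_le_mul_of_nonneg_left (le_exp_sub_mul_add_exp_mul ht (by linarith)
      (mul_nonneg (hγT t ht) hA) (mul_nonneg hm hn)
      (by nlinarith [hΦT t ht])) (exp_pos _).le,
    eq_mul_exp_mul_coeffs (fun t => eq_wronskian_combination hγ hΦ hρ hγeq hΦeq hρeq hW t T)
      hT hT' t⟩

end LowerBound

theorem exists_pos_le_abs_and_sign_eq {ρ : ℝ → ℝ} {L T m : ℝ} (hL : L ≠ 0) (hm : 0 < m)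
    (h : ∀ t ≤ T, ∃ x ≥ m, ρ t = L * x) :
    (∃ m > (0 : ℝ), ∀ t ≤ T, m ≤ |ρ t|) ∧ ∀ t ≤ T, ρ t ≠ 0 ∧ Real.sign (ρ t) = Real.sign L := by
  refine ⟨⟨|L| * m, mul_pos (abs_pos.2 hL) hm, fun t ht => ?_⟩, fun t ht => ?_⟩ <;>
    obtain ⟨x, hx, hρ⟩ := h t ht <;> rw [hρ]
  · rw [abs_mul]
    exact mul_le_mul_of_nonneg_left (hx.trans (le_abs_self x)) (abs_nonneg L)
  · have hx0 : 0 < x := hm.trans_le hx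
    rcases hL.lt_or_gt with hL | hL
    · have hLx := mul_neg_of_neg_of_pos hL hx0
      exact ⟨hLx.ne, by rw [Real.sign_of_neg hLx, Real.sign_of_neg hL]⟩
    · have hLx := mul_pos hL hx0
      exact ⟨hLx.ne', by rw [Real.sign_of_pos hLx, Real.sign_of_pos hL]⟩

theorem stmt_7_general (d : ℤ) (hd : 13 ≤ d) (a : ℝ) (ha : a ∈ Set.Ioo (0 : ℝ) 1)
    (LInf : ℝ) (hLInf : LInf ≠ 0)
    (q γ Φ ρ : ℝ → ℝ → ℝ) (η η' : ℝ → ℝ)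
    (hγC : ∀ b > (0 : ℝ), ContDiff ℝ 2 (γ b))
    (hΦC : ∀ b > (0 : ℝ), ContDiff ℝ 2 (Φ b))
    (hρC : ∀ b > (0 : ℝ), ContDiff ℝ 2 (ρ b))
    (hγeq : ∀ b > (0 : ℝ), ∀ t : ℝ,
      deriv (deriv (γ b)) t + ((d : ℝ) - 4) * deriv (γ b) t + q b t * γ b t = 0)
    (hΦeq : ∀ b > (0 : ℝ), ∀ t : ℝ,
      deriv (deriv (Φ b)) t + ((d : ℝ) - 4) * deriv (Φ b) t + q b t * Φ b t = 0)
    (hρeq : ∀ b > (0 : ℝ), ∀ t : ℝ,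
      deriv (deriv (ρ b)) t + ((d : ℝ) - 4) * deriv (ρ b) t + q b t * ρ b t = 0)
    (hCs : ∃ Cs > (0 : ℝ), ∃ τ : ℝ, ∀ b > (0 : ℝ), ∀ t ≤ τ,
      |γ b t - Real.exp t| ≤ Cs * Real.exp (3 * t) ∧
      |deriv (γ b) t - Real.exp t| ≤ Cs * Real.exp (3 * t) ∧
      |Φ b t - (2 - (d : ℝ))⁻¹ * Real.exp ((3 - (d : ℝ)) * t)|
        ≤ Cs * Real.exp ((5 - (d : ℝ)) * t) ∧
      |deriv (Φ b) t - (3 - (d : ℝ)) * (2 - (d : ℝ))⁻¹ * Real.exp ((3 - (d : ℝ)) * t)|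
        ≤ Cs * Real.exp ((5 - (d : ℝ)) * t))
    (hW : ∀ b > (0 : ℝ), ∀ t : ℝ,
      γ b t * deriv (Φ b) t - deriv (γ b) t * Φ b t = Real.exp ((4 - (d : ℝ)) * t))
    (hρval : ∀ b > (0 : ℝ),
      ρ b ((a - 1) * Real.log b)
        = LInf * Real.exp (kappam d * ((a - 1) * Real.log b)) * (1 + η b) ∧
      deriv (ρ b) ((a - 1) * Real.log b)
        = LInf * kappam d * Real.exp (kappam d * ((a - 1) * Real.log b)) * (1 + η' b))
    (hηlim : Tendsto η atTop (𝓝 0)) (hη'lim : Tendsto η' atTop (𝓝 0)) :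
    ∃ b₀ > (0 : ℝ), ∀ b > b₀,
      (∃ m > (0 : ℝ), ∀ t ≤ (a - 1) * Real.log b, m ≤ |ρ b t|) ∧
      (∀ t ≤ (a - 1) * Real.log b, ρ b t ≠ 0 ∧ Real.sign (ρ b t) = Real.sign LInf) := by
  obtain ⟨C, hC, τ, hE⟩ := hCs
  have hd3 : (3 : ℝ) < d := by exact_mod_cast (by omega : (3 : ℤ) < d)
  have hκ1 := kappam_lt_one (by omega : 2 < d)
  have hκd := kappam_add_sub_three_pos (by omega : 3 < d)
  set κ := kappam d
  set ℓ : ℝ := (2 - (d : ℝ))⁻¹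
  have hℓ : ℓ < 0 := inv_lt_zero.2 (by linarith)
  set T : ℝ → ℝ := fun b => (a - 1) * Real.log b
  have hT : Tendsto T atTop atBot :=
    Real.tendsto_log_atTop.const_mul_atTop_of_neg (by linarith [ha.2])
  have hN := (eventually_gt_atTop (0 : ℝ)).mono fun b hb t (ht : t ≤ τ) =>
    abs_expScaled_sub_le_of_estimates (hE b hb t ht)
  have hNγ := hN.mono fun b h t ht => (h t ht).1
  have hNγ' := hN.mono fun b h t ht => (h t ht).2.1
  have hNΦ := hN.mono fun b h t ht => (h t ht).2.2.1
  have hNΦ' := hN.mono fun b h t ht => (h t ht).2.2.2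
  have hr : Tendsto (fun b => 1 + η b) atTop (𝓝 1) := by simpa using hηlim.const_add 1
  have hr' : Tendsto (fun b => 1 + η' b) atTop (𝓝 1) := by simpa using hη'lim.const_add 1
  have hA := tendsto_regularCoeff (κ := κ) (tendsto_apply_of_abs_sub_le hT hC.le hNΦ)
    (tendsto_apply_of_abs_sub_le hT hC.le hNΦ') hr hr'
  have hB := tendsto_singularCoeff (κ := κ) (tendsto_apply_of_abs_sub_le hT hC.le hNγ)
    (tendsto_apply_of_abs_sub_le hT hC.le hNγ') hr hr'
  obtain ⟨b₀, hb₀⟩ := eventually_atTop.1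
    ((eventually_forall_le_abs_sub_le hT hC.le hNγ one_pos).and
    ((eventually_forall_le_abs_sub_le hT hC.le hNΦ (by linarith : 0 < -(ℓ / 2))).and
    ((hA.eventually_const_le (u := 0) (by nlinarith)).and
    ((hB.eventually_le_const (by linarith : κ * 1 - 1 < -((1 - κ) / 2))).and
      (eventually_gt_atTop 0)))))
  refine ⟨max b₀ 1, by positivity, fun b hb => ?_⟩
  obtain ⟨hγb, hΦb, hAb, hBb, hb0⟩ := hb₀ b ((le_max_left _ _).trans hb.le)
  have hWb (t : ℝ) : wronskian (γ b) (Φ b) t * Real.exp (((d : ℝ) - 4) * t) = 1 := by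
    rw [wronskian, hW b hb0 t, ← Real.exp_add, ← Real.exp_zero]; ring_nf
  have hmn : 0 < -(ℓ / 2) * ((1 - κ) / 2) := mul_pos (by linarith) (by linarith)
  refine exists_pos_le_abs_and_sign_eq hLInf (mul_pos (Real.exp_pos _) hmn) <|
    exists_ge_eq_mul_of_coeff_bounds hd3.le (hγC b hb0) (hΦC b hb0) (hρC b hb0) (hγeq b hb0)
      (hΦeq b hb0) (hρeq b hb0) hWb (hρval b hb0).1 (hρval b hb0).2
      (fun t ht => ?_) (fun t ht => ?_) hAb hBb (by linarith) (by linarith)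
  · linarith [(abs_le.1 (hγb t ht)).1]
  · linarith [(abs_le.1 (hΦb t ht)).2]

/-- Lemma 5.2 (Lemma `lemma-2` in the paper): the solution `ρ_b` of the linear
second-order equation, prescribed at `t₀(b) = (a-1) log b` by the `κ₋`-asymptotics,
does not vanish on `(-∞, t₀(b)]` for large `b`, and its sign there is that of `L_∞`. -/
theorem stmt_7 (d : ℤ) (hd : 13 ≤ d) (a : ℝ) (ha : a ∈ Set.Ioo (0 : ℝ) 1)
    (LInf : ℝ) (hLInf : LInf ≠ 0)
    (q γ Φ ρ : ℝ → ℝ → ℝ) (η η' : ℝ → ℝ)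
    (hq : ∀ b > (0 : ℝ), Continuous (q b))
    (hγC : ∀ b > (0 : ℝ), ContDiff ℝ 2 (γ b))
    (hΦC : ∀ b > (0 : ℝ), ContDiff ℝ 2 (Φ b))
    (hρC : ∀ b > (0 : ℝ), ContDiff ℝ 2 (ρ b))
    (hγeq : ∀ b > (0 : ℝ), ∀ t : ℝ,
      deriv (deriv (γ b)) t + ((d : ℝ) - 4) * deriv (γ b) t + q b t * γ b t = 0)
    (hΦeq : ∀ b > (0 : ℝ), ∀ t : ℝ,
      deriv (deriv (Φ b)) t + ((d : ℝ) - 4) * deriv (Φ b) t + q b t * Φ b t = 0)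
    (hρeq : ∀ b > (0 : ℝ), ∀ t : ℝ,
      deriv (deriv (ρ b)) t + ((d : ℝ) - 4) * deriv (ρ b) t + q b t * ρ b t = 0)
    (hCs : ∃ Cs > (0 : ℝ), ∃ τ : ℝ, ∀ b > (0 : ℝ), ∀ t ≤ τ,
      |γ b t - Real.exp t| ≤ Cs * Real.exp (3 * t) ∧
      |deriv (γ b) t - Real.exp t| ≤ Cs * Real.exp (3 * t) ∧
      |Φ b t - (2 - (d : ℝ))⁻¹ * Real.exp ((3 - (d : ℝ)) * t)|
        ≤ Cs * Real.exp ((5 - (d : ℝ)) * t) ∧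
      |deriv (Φ b) t - (3 - (d : ℝ)) * (2 - (d : ℝ))⁻¹ * Real.exp ((3 - (d : ℝ)) * t)|
        ≤ Cs * Real.exp ((5 - (d : ℝ)) * t))
    (hW : ∀ b > (0 : ℝ), ∀ t : ℝ,
      γ b t * deriv (Φ b) t - deriv (γ b) t * Φ b t = Real.exp ((4 - (d : ℝ)) * t))
    (hρval : ∀ b > (0 : ℝ),
      ρ b ((a - 1) * Real.log b)
        = LInf * Real.exp (kappam d * ((a - 1) * Real.log b)) * (1 + η b) ∧
      deriv (ρ b) ((a - 1) * Real.log b)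
        = LInf * kappam d * Real.exp (kappam d * ((a - 1) * Real.log b)) * (1 + η' b))
    (hηlim : Tendsto η atTop (𝓝 0)) (hη'lim : Tendsto η' atTop (𝓝 0)) :
    ∃ b₀ > (0 : ℝ), ∀ b > b₀,
      (∃ m > (0 : ℝ), ∀ t ≤ (a - 1) * Real.log b, m ≤ |ρ b t|) ∧
      (∀ t ≤ (a - 1) * Real.log b, ρ b t ≠ 0 ∧ Real.sign (ρ b t) = Real.sign LInf) :=
  stmt_7_general d hd a ha LInf hLInf q γ Φ ρ η η' hγC hΦC hρC hγeq hΦeq hρeq hCs hW hρval hηlim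
    hη'lim
end

section
/- Let g : ℝ → ℝ be a C¹ function whose zero set is finite and all of whose zeros are simple (g(z) = 0 implies g'(z) ≠ 0), and let A < B be real numbers such that every zero of g lies in the open interval (A,B). Then there exists δ > 0 such that every C¹ function f : ℝ → ℝ satisfying sup over t ∈ [A,B] of (|f(t) − g(t)| + |f'(t) − g'(t)|) < δ and f(t) ≠ 0 for every t ∉ [A,B] has a finite zero set of the same cardinality as the zero set of g. -/
open Filter Set Metric

/-!
Let `c > 0` bound `|g'|` from below on the zeros of `g`. Around each zero choose a closed
interval on which `|g'| > c / 2`, these intervals being pairwise disjoint and contained in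
`(A, B)`. On the compact rest `K` of `[A, B]` the function `|g|` has a positive minimum `ε`.
If `f` is `C¹`-close to `g` within `min ε (c / 2)`, then `f` has no zero on `K`, has the sign
of `g` at the ends of each interval, and has a nonvanishing derivative on it (hence is strictly
monotone there, by Darboux); so `f` has exactly one zero in each interval and no other zero.
-/

theorem mul_pos_of_abs_sub_lt_abs {u x : ℝ} (h : |u - x| < |x|) : 0 < u * x := by
  nlinarith [abs_nonneg (u - x), sq_abs (u - x), sq_abs x, sq_nonneg u]

theorem mul_neg_of_abs_sub_lt_abs {x y u v : ℝ} (hxy : x * y < 0) (hu : |u - x| < |x|)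
    (hv : |v - y| < |y|) : u * v < 0 := by
  have hux := mul_pos_of_abs_sub_lt_abs hu
  have hvy := mul_pos_of_abs_sub_lt_abs hv
  nlinarith [mul_pos hux hvy]

theorem strictMonoOn_or_strictAntiOn_of_deriv_ne_zero {f : ℝ → ℝ} {s : Set ℝ} (hs : Convex ℝ s)
    (hf : ∀ x ∈ s, deriv f x ≠ 0) : StrictMonoOn f s ∨ StrictAntiOn f s := by
  have hdiff : ∀ x ∈ s, DifferentiableAt ℝ f x := fun x hx =>
    differentiableAt_of_deriv_ne_zero (hf x hx)
  have hcont : ContinuousOn f s := fun x hx => (hdiff x hx).continuousAt.continuousWithinAt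
  rcases hasDerivWithinAt_forall_lt_or_forall_gt_of_forall_ne hs
    (fun x hx => (hdiff x hx).hasDerivAt.hasDerivWithinAt) hf with hneg | hpos
  · exact .inr (strictAntiOn_of_deriv_neg hs hcont fun x hx => hneg x (interior_subset hx))
  · exact .inl (strictMonoOn_of_deriv_pos hs hcont fun x hx => hpos x (interior_subset hx))

theorem mul_neg_of_eq_zero_of_deriv_ne_zero {f : ℝ → ℝ} {a z b : ℝ} (haz : a < z) (hzb : z < b)
    (hz : f z = 0) (hf : ∀ x ∈ Icc a b, deriv f x ≠ 0) : f a * f b < 0 := by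
  have ha : a ∈ Icc a b := ⟨le_rfl, (haz.trans hzb).le⟩
  have hb : b ∈ Icc a b := ⟨(haz.trans hzb).le, le_rfl⟩
  have hzI : z ∈ Icc a b := ⟨haz.le, hzb.le⟩
  rcases strictMonoOn_or_strictAntiOn_of_deriv_ne_zero (convex_Icc a b) hf with hmono | hanti
  · exact mul_neg_of_neg_of_pos (hz ▸ hmono ha hzI haz) (hz ▸ hmono hzI hb hzb)
  · exact mul_neg_of_pos_of_neg (hz ▸ hanti ha hzI haz) (hz ▸ hanti hzI hb hzb)

theorem existsUnique_eq_zero_of_mul_neg_of_deriv_ne_zero {f : ℝ → ℝ} {a b : ℝ} (hab : a ≤ b)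
    (hsign : f a * f b < 0) (hf : ∀ x ∈ Icc a b, deriv f x ≠ 0) :
    ∃! x, x ∈ Icc a b ∧ f x = 0 := by
  have hcont : ContinuousOn f (Icc a b) := fun x hx =>
    (differentiableAt_of_deriv_ne_zero (hf x hx)).continuousAt.continuousWithinAt
  have hzero : (0 : ℝ) ∈ uIcc (f a) (f b) := by
    rcases mul_neg_iff.1 hsign with ⟨ha, hb⟩ | ⟨ha, hb⟩
    · exact mem_uIcc.2 (.inr ⟨hb.le, ha.le⟩)
    · exact mem_uIcc.2 (.inl ⟨ha.le, hb.le⟩)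
  obtain ⟨x, hx, hfx⟩ := intermediate_value_uIcc (uIcc_of_le hab ▸ hcont) hzero
  rw [uIcc_of_le hab] at hx
  have hinj : InjOn f (Icc a b) :=
    (strictMonoOn_or_strictAntiOn_of_deriv_ne_zero (convex_Icc a b) hf).elim
      StrictMonoOn.injOn StrictAntiOn.injOn
  exact ⟨x, ⟨hx, hfx⟩, fun y ⟨hy, hfy⟩ => hinj hy hx (hfy.trans hfx.symm)⟩

theorem existsUnique_eq_zero_of_abs_sub_lt_abs {f g : ℝ → ℝ} {a z b : ℝ} (haz : a < z)
    (hzb : z < b) (hgz : g z = 0)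
    (hderiv : ∀ x ∈ Icc a b, |deriv f x - deriv g x| < |deriv g x|)
    (ha : |f a - g a| < |g a|) (hb : |f b - g b| < |g b|) :
    ∃! x, x ∈ Icc a b ∧ f x = 0 := by
  have hg' : ∀ x ∈ Icc a b, deriv g x ≠ 0 := fun x hx =>
    abs_pos.1 ((abs_nonneg _).trans_lt (hderiv x hx))
  have hf' : ∀ x ∈ Icc a b, deriv f x ≠ 0 := fun x hx =>
    left_ne_zero_of_mul (mul_pos_of_abs_sub_lt_abs (hderiv x hx)).ne'
  exact existsUnique_eq_zero_of_mul_neg_of_deriv_ne_zero (haz.trans hzb).le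
    (mul_neg_of_abs_sub_lt_abs (mul_neg_of_eq_zero_of_deriv_ne_zero haz hzb hgz hg') ha hb) hf'

theorem Set.Finite.exists_pairwiseDisjoint_closedBall_subset {X : Type*} [MetricSpace X]
    {Z W : Set X} (hZ : Z.Finite) (hW : IsOpen W) (hZW : Z ⊆ W) :
    ∃ ρ : X → ℝ, (∀ z ∈ Z, 0 < ρ z ∧ closedBall z (ρ z) ⊆ W) ∧
      Z.PairwiseDisjoint fun z => closedBall z (ρ z) := by
  obtain ⟨V, hV, hVdisj⟩ := hZ.t2_separation
  have hnhds : ∀ z ∈ Z, ∃ ρ > 0, closedBall z ρ ⊆ V z ∩ W := fun z hz =>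
    nhds_basis_closedBall.mem_iff.1
      (inter_mem ((hV z).2.mem_nhds (hV z).1) (hW.mem_nhds (hZW hz)))
  choose! ρ hρ hρVW using hnhds
  exact ⟨ρ, fun z hz => ⟨hρ z hz, (hρVW z hz).trans inter_subset_right⟩,
    hVdisj.mono_on fun z hz => (hρVW z hz).trans inter_subset_left⟩

theorem Set.Finite.finite_and_ncard_eq_of_existsUnique {X : Type*} {Z S : Set X}
    {I : X → Set X} (hZ : Z.Finite) (hdisj : Z.PairwiseDisjoint I) (hS : S ⊆ ⋃ z ∈ Z, I z)
    (huniq : ∀ z ∈ Z, ∃! x, x ∈ I z ∧ x ∈ S) : S.Finite ∧ S.ncard = Z.ncard := by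
  choose! φ hφ hφuniq using huniq
  have hSφ : S = φ '' Z := by
    refine (image_subset_iff.2 fun z hz => (hφ z hz).2).antisymm' fun x hx => ?_
    obtain ⟨z, hz, hxz⟩ := mem_iUnion₂.1 (hS hx)
    exact ⟨z, hz, (hφuniq z hz x ⟨hxz, hx⟩).symm⟩
  have hinj : InjOn φ Z := fun z hz z' hz' h =>
    hdisj.elim_set hz hz' (φ z) (hφ z hz).1 (h ▸ (hφ z' hz').1)
  exact hSφ ▸ ⟨hZ.image φ, hinj.ncard_image⟩

theorem notMem_biUnion_ball_of_mem_sphere {X : Type*} [PseudoMetricSpace X] {Z : Set X}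
    {ρ : X → ℝ} (hdisj : Z.PairwiseDisjoint fun z => closedBall z (ρ z)) {z x : X} (hz : z ∈ Z)
    (hx : x ∈ sphere z (ρ z)) : x ∉ ⋃ z' ∈ Z, ball z' (ρ z') := by
  intro hmem
  obtain ⟨z', hz', hxz'⟩ := mem_iUnion₂.1 hmem
  obtain rfl := hdisj.elim_set hz hz' x (sphere_subset_closedBall hx) (ball_subset_closedBall hxz')
  exact (mem_sphere.1 hx).not_lt (mem_ball.1 hxz')

theorem stmt_9_general (g : ℝ → ℝ) (hg : ContDiff ℝ 1 g)
    (hfin : {t : ℝ | g t = 0}.Finite)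
    (hsimple : ∀ z : ℝ, g z = 0 → deriv g z ≠ 0)
    (A B : ℝ)
    (hzeros : ∀ z : ℝ, g z = 0 → z ∈ Set.Ioo A B) :
    ∃ δ > (0 : ℝ), ∀ f : ℝ → ℝ, ContDiff ℝ 1 f →
      (∀ t ∈ Set.Icc A B, |f t - g t| + |deriv f t - deriv g t| < δ) →
      (∀ t ∉ Set.Icc A B, f t ≠ 0) →
      {t : ℝ | f t = 0}.Finite ∧ {t : ℝ | f t = 0}.ncard = {t : ℝ | g t = 0}.ncard := by
  have hg' : Continuous (deriv g) := hg.continuous_deriv le_rfl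
  obtain ⟨c, hc, hcZ⟩ := hfin.isCompact.exists_forall_le' hg'.abs.continuousOn
    fun z hz => abs_pos.2 (hsimple z hz)
  obtain ⟨ρ, hρ, hdisj⟩ := hfin.exists_pairwiseDisjoint_closedBall_subset
    (isOpen_Ioo.inter (isOpen_lt continuous_const hg'.abs))
    fun z hz => ⟨hzeros z hz, show c / 2 < |deriv g z| by linarith [hcZ z hz]⟩
  set K := Icc A B \ ⋃ z ∈ {t | g t = 0}, ball z (ρ z)
  obtain ⟨ε, hε, hεK⟩ := (isCompact_Icc.diff (isOpen_biUnion fun z _ => isOpen_ball)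
    ).exists_forall_le' hg.continuous.abs.continuousOn
    fun t ht => abs_pos.2 fun h => ht.2 (mem_biUnion h (mem_ball_self (hρ t h).1))
  refine ⟨min ε (c / 2), by positivity, fun f _ hclose hout => ?_⟩
  have hval : ∀ t ∈ K, |f t - g t| < |g t| := fun t ht => by
    linarith [hclose t ht.1, hεK t ht, min_le_left ε (c / 2), abs_nonneg (deriv f t - deriv g t)]
  have hder : ∀ t ∈ Icc A B, |deriv f t - deriv g t| < c / 2 := fun t ht => by
    linarith [hclose t ht, min_le_right ε (c / 2), abs_nonneg (f t - g t)]
  refine hfin.finite_and_ncard_eq_of_existsUnique hdisj (fun t ht => ?_) fun z hz => ?_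
  · have htAB : t ∈ Icc A B := by_contra fun h => hout t h ht
    have htK : t ∉ K := fun htK => by simpa [show f t = 0 from ht] using hval t htK
    obtain ⟨z, hz, hzt⟩ := mem_iUnion₂.1 (not_not.1 fun h => htK ⟨htAB, h⟩)
    exact mem_iUnion₂.2 ⟨z, hz, ball_subset_closedBall hzt⟩
  · obtain ⟨hρz, hball⟩ := hρ z hz
    have hend : ∀ x ∈ sphere z (ρ z), x ∈ K := fun x hx =>
      ⟨Ioo_subset_Icc_self (hball (sphere_subset_closedBall hx)).1,
        notMem_biUnion_ball_of_mem_sphere hdisj hz hx⟩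
    rw [Real.closedBall_eq_Icc] at hball ⊢
    exact existsUnique_eq_zero_of_abs_sub_lt_abs (by linarith) (by linarith) hz
      (fun x hx => (hder x (Ioo_subset_Icc_self (hball hx).1)).trans (hball hx).2)
      (hval _ (hend _ (by simp [abs_of_pos hρz])))
      (hval _ (hend _ (by simp [abs_of_pos hρz])))

/-- Zero-counting stability: a C¹ function with finitely many simple zeros, all lying in
`(A,B)`, has the same number of zeros as any C¹ function that is C¹-close to it on `[A,B]`
and nonvanishing outside `[A,B]`. -/
theorem stmt_9 (g : ℝ → ℝ) (hg : ContDiff ℝ 1 g)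
    (hfin : {t : ℝ | g t = 0}.Finite)
    (hsimple : ∀ z : ℝ, g z = 0 → deriv g z ≠ 0)
    (A B : ℝ) (hAB : A < B)
    (hzeros : ∀ z : ℝ, g z = 0 → z ∈ Set.Ioo A B) :
    ∃ δ > (0 : ℝ), ∀ f : ℝ → ℝ, ContDiff ℝ 1 f →
      (∀ t ∈ Set.Icc A B, |f t - g t| + |deriv f t - deriv g t| < δ) →
      (∀ t ∉ Set.Icc A B, f t ≠ 0) →
      {t : ℝ | f t = 0}.Finite ∧ {t : ℝ | f t = 0}.ncard = {t : ℝ | g t = 0}.ncard :=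
  stmt_9_general g hg hfin hsimple A B hzeros
end

section
/- Fix an integer d ≥ 5 and let Q : ℝ → ℝ be continuous with Q(t) − (3−d) = O(e^{2t}) as t → −∞. Suppose γ : ℝ → ℝ is a C² solution of γ''(t) + (d−4)γ'(t) + Q(t)γ(t) = 0 with γ(t) − e^t = O(e^{3t}) and γ'(t) − e^t = O(e^{3t}) as t → −∞. Then every C² solution Ξ : ℝ → ℝ of the same equation whose Wronskian with γ satisfies γ(t)Ξ'(t) − γ'(t)Ξ(t) = e^{(4−d)t} for all t ∈ ℝ obeys Ξ(t) − (2−d)^{-1}e^{(3−d)t} = O(e^{(5−d)t}) as t → −∞. -/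
/-!
The Wronskian relation says that `(Ξ / γ)' = e^{(4-d)t} / γ²`. Since `γ = e^t (1 + O(e^{2t}))`,
this derivative is `e^{(2-d)t} + O(e^{(4-d)t})`, so `Ξ / γ + e^{(2-d)t} / (d - 2)` has derivative
`O(e^{(4-d)t})`; as `d > 4` this bound grows at `-∞`, and integrating it from a fixed point makes
the function itself `O(e^{(4-d)t})`, the integration constant included. Multiplying back by
`γ = e^t + O(e^{3t})` gives `Ξ = (2-d)⁻¹ e^{(3-d)t} + O(e^{(5-d)t})`.
-/

open Filter Asymptotics Topology Set

theorem hasDerivAt_exp_const_mul (k t : ℝ) :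
    HasDerivAt (fun s => Real.exp (k * s)) (k * Real.exp (k * t)) t :=
  (((hasDerivAt_id t).const_mul k).exp).congr_deriv (by simp only [id, mul_one, mul_comm])

theorem isBigO_exp_mul_atBot_of_le {α β : ℝ} (h : β ≤ α) :
    (fun t : ℝ => Real.exp (α * t)) =O[atBot] fun t => Real.exp (β * t) := by
  refine Real.isBigO_exp_comp_exp_comp.2 ⟨0, eventually_map.2 ?_⟩
  filter_upwards [eventually_le_atBot 0] with t ht
  simp only [Pi.sub_apply]
  nlinarith

theorem isBigO_const_exp_mul_atBot {k : ℝ} (hk : k ≤ 0) (c : ℝ) :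
    (fun _ : ℝ => c) =O[atBot] fun t => Real.exp (k * t) := by
  refine (isBigO_const_const c (one_ne_zero (α := ℝ)) atBot).trans ?_
  simpa using isBigO_exp_mul_atBot_of_le (α := 0) hk

theorem Asymptotics.IsBigO.mul_exp_mul {l : Filter ℝ} {f g : ℝ → ℝ} {a b c : ℝ}
    (hf : f =O[l] fun t => Real.exp (a * t)) (hg : g =O[l] fun t => Real.exp (b * t))
    (h : a + b = c) :
    (fun t => f t * g t) =O[l] fun t => Real.exp (c * t) := by
  simpa only [← h, add_mul, Real.exp_add] using hf.mul hg

theorem abs_sub_le_sub_of_abs_deriv_le_deriv {f f' g g' : ℝ → ℝ} {T : ℝ}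
    (hf : ∀ s ≤ T, HasDerivAt f (f' s) s) (hg : ∀ s ≤ T, HasDerivAt g (g' s) s)
    (hle : ∀ s ≤ T, |f' s| ≤ g' s) {t : ℝ} (ht : t ≤ T) :
    |f t - f T| ≤ g T - g t := by
  -- `g - f` and `g + f` are monotone on `(-∞, T]`
  have mono : ∀ φ φ' : ℝ → ℝ, (∀ s ≤ T, HasDerivAt φ (φ' s) s) →
      (∀ s ≤ T, 0 ≤ φ' s) → φ t ≤ φ T := by
    intro φ φ' hφ hφ'
    refine monotoneOn_of_hasDerivWithinAt_nonneg (convex_Iic T)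
      (fun s hs => (hφ s hs).continuousAt.continuousWithinAt) (f' := φ') ?_ ?_ ht (le_refl T) ht
    · rw [interior_Iic]; exact fun s hs => (hφ s hs.le).hasDerivWithinAt
    · rw [interior_Iic]; exact fun s hs => hφ' s hs.le
  have hgf := mono (fun s => g s - f s) _ (fun s hs => (hg s hs).sub (hf s hs))
    fun s hs => by linarith [le_abs_self (f' s), hle s hs]
  have hgf' := mono (fun s => g s + f s) _ (fun s hs => (hg s hs).add (hf s hs))
    fun s hs => by linarith [neg_abs_le (f' s), hle s hs]
  rw [abs_le]
  constructor <;> linarith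

theorem isBigO_exp_mul_atBot_of_hasDerivAt {f f' : ℝ → ℝ} {k : ℝ} (hk : k < 0)
    (hf : ∀ᶠ t in atBot, HasDerivAt f (f' t) t)
    (hf' : f' =O[atBot] fun t => Real.exp (k * t)) :
    f =O[atBot] fun t => Real.exp (k * t) := by
  obtain ⟨C, hC0, hC⟩ := hf'.exists_nonneg
  obtain ⟨T, hT⟩ := eventually_atBot.1 (hf.and hC.bound)
  have hG : ∀ s, HasDerivAt (fun t => C / k * Real.exp (k * t)) (C * Real.exp (k * s)) s :=
    fun s => ((hasDerivAt_exp_const_mul k s).const_mul (C / k)).congr_deriv (by field_simp [hk.ne])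
  have hbound : ∀ t ≤ T, |f t - f T| ≤ C / -k * Real.exp (k * t) := by
    intro t ht
    refine (abs_sub_le_sub_of_abs_deriv_le_deriv (fun s hs => (hT s hs).1) (fun s _ => hG s)
      (fun s hs => ?_) ht).trans ?_
    · simpa [abs_of_pos (Real.exp_pos _)] using (hT s hs).2
    · have : 0 ≤ C / -k * Real.exp (k * T) := by have := neg_pos.2 hk; positivity
      rw [div_neg, neg_mul] at *
      linarith
  have hsub : (fun t => f t - f T) =O[atBot] fun t => Real.exp (k * t) := by
    refine IsBigO.of_bound (C / -k) (eventually_atBot.2 ⟨T, fun t ht => ?_⟩)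
    simpa [abs_of_pos (Real.exp_pos _)] using hbound t ht
  simpa using hsub.add (isBigO_const_exp_mul_atBot hk.le (f T))

theorem isBigO_inv_sq_sub_one {ι : Type*} {l : Filter ι} {ρ g : ι → ℝ}
    (h : (fun x => ρ x - 1) =O[l] g) (hlim : Tendsto ρ l (𝓝 1)) :
    (fun x => (ρ x ^ 2)⁻¹ - 1) =O[l] g := by
  have hF : DifferentiableAt ℝ (fun x : ℝ => (x ^ 2)⁻¹) 1 := by fun_prop (disch := norm_num)
  simpa [Function.comp_def] using (hF.isBigO_sub.comp_tendsto hlim).trans h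

theorem isBigO_div_exp_sub_one_of_isBigO_sub_exp {γ : ℝ → ℝ}
    (hγ : (fun t => γ t - Real.exp t) =O[atBot] fun t => Real.exp (3 * t)) :
    (fun t => γ t / Real.exp t - 1) =O[atBot] fun t => Real.exp (2 * t) := by
  refine (hγ.mul_exp_mul (isBigO_refl (fun t => Real.exp (-1 * t)) atBot)
    (by norm_num)).congr_left fun t => ?_
  rw [neg_one_mul, Real.exp_neg]
  field_simp

theorem tendsto_div_exp_of_isBigO_sub_exp {γ : ℝ → ℝ}
    (hγ : (fun t => γ t - Real.exp t) =O[atBot] fun t => Real.exp (3 * t)) :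
    Tendsto (fun t => γ t / Real.exp t) atBot (𝓝 1) :=
  tendsto_sub_nhds_zero_iff.1 <| (isBigO_div_exp_sub_one_of_isBigO_sub_exp hγ).trans_tendsto <|
    Real.tendsto_exp_atBot.comp (tendsto_id.const_mul_atBot two_pos)

theorem eventually_ne_zero_of_isBigO_sub_exp {γ : ℝ → ℝ}
    (hγ : (fun t => γ t - Real.exp t) =O[atBot] fun t => Real.exp (3 * t)) :
    ∀ᶠ t in atBot, γ t ≠ 0 :=
  ((tendsto_div_exp_of_isBigO_sub_exp hγ).eventually_ne one_ne_zero).mono fun t ht h0 => by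
    simp [h0] at ht

theorem hasDerivAt_div_of_wronskian {γ Ξ : ℝ → ℝ} {t : ℝ} (hγ : DifferentiableAt ℝ γ t)
    (hΞ : DifferentiableAt ℝ Ξ t) (hγt : γ t ≠ 0) :
    HasDerivAt (fun s => Ξ s / γ s) ((γ t * deriv Ξ t - deriv γ t * Ξ t) / γ t ^ 2) t :=
  (hΞ.hasDerivAt.div hγ.hasDerivAt hγt).congr_deriv (by ring)

theorem isBigO_div_add_exp_of_wronskian {a : ℝ} (ha : 4 < a) {γ Ξ : ℝ → ℝ}
    (hγd : Differentiable ℝ γ) (hΞd : Differentiable ℝ Ξ)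
    (hγ : (fun t => γ t - Real.exp t) =O[atBot] fun t => Real.exp (3 * t))
    (hW : ∀ t, γ t * deriv Ξ t - deriv γ t * Ξ t = Real.exp ((4 - a) * t)) :
    (fun t => Ξ t / γ t + Real.exp ((2 - a) * t) / (a - 2))
      =O[atBot] fun t => Real.exp ((4 - a) * t) := by
  have hρ := isBigO_div_exp_sub_one_of_isBigO_sub_exp hγ
  have hρlim := tendsto_div_exp_of_isBigO_sub_exp hγ
  refine isBigO_exp_mul_atBot_of_hasDerivAt (by linarith)
    (f' := fun t => Real.exp ((2 - a) * t) * (((γ t / Real.exp t) ^ 2)⁻¹ - 1)) ?_ ?_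
  · filter_upwards [eventually_ne_zero_of_isBigO_sub_exp hγ] with t ht
    refine ((hasDerivAt_div_of_wronskian (hγd t) (hΞd t) ht).add
      ((hasDerivAt_exp_const_mul (2 - a) t).div_const (a - 2))).congr_deriv ?_
    have hexp : Real.exp ((4 - a) * t) = Real.exp ((2 - a) * t) * Real.exp t ^ 2 := by
      rw [sq, ← Real.exp_add, ← Real.exp_add]; ring_nf
    have ha2 : a - 2 ≠ 0 := by linarith
    rw [hW t, hexp]
    field_simp
    ring
  · exact (isBigO_refl _ _).mul_exp_mul (isBigO_inv_sq_sub_one hρ hρlim) (by ring)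

theorem stmt_12_general (d : ℤ) (hd : 5 ≤ d)
    (γ : ℝ → ℝ) (hγC : ContDiff ℝ 2 γ)
    (hγasym : (fun t : ℝ => γ t - Real.exp t) =O[atBot] fun t : ℝ => Real.exp (3 * t))
    (Ξ : ℝ → ℝ) (hΞC : ContDiff ℝ 2 Ξ)
    (hW : ∀ t : ℝ, γ t * deriv Ξ t - deriv γ t * Ξ t = Real.exp ((4 - (d : ℝ)) * t)) :
    (fun t : ℝ => Ξ t - (2 - (d : ℝ))⁻¹ * Real.exp ((3 - (d : ℝ)) * t))
      =O[atBot] fun t : ℝ => Real.exp ((5 - (d : ℝ)) * t) := by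
  have hd4 : (4 : ℝ) < d := by exact_mod_cast (by omega : (4 : ℤ) < d)
  have hu := isBigO_div_add_exp_of_wronskian hd4 (hγC.differentiable two_ne_zero)
    (hΞC.differentiable two_ne_zero) hγasym hW
  have hγO : γ =O[atBot] fun t => Real.exp (1 * t) := by
    simpa using (hγasym.trans (isBigO_exp_mul_atBot_of_le (by norm_num))).add
      (isBigO_refl (fun t => Real.exp (1 * t)) atBot)
  have hsplit := (hγO.mul_exp_mul hu (c := 5 - d) (by ring)).sub (hγasym.mul_exp_mul
    ((isBigO_refl (fun t => Real.exp ((2 - (d : ℝ)) * t)) atBot).const_mul_left (d - 2 : ℝ)⁻¹)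
    (by ring))
  -- `Ξ - (2-d)⁻¹ e^{(3-d)t} = γ (Ξ/γ + e^{(2-d)t}/(d-2)) - (γ - e^t) (d-2)⁻¹ e^{(2-d)t}`
  refine hsplit.congr' ?_ .rfl
  filter_upwards [eventually_ne_zero_of_isBigO_sub_exp hγasym] with t ht
  have hexp : Real.exp ((3 - (d : ℝ)) * t) = Real.exp t * Real.exp ((2 - d) * t) := by
    rw [← Real.exp_add]; ring_nf
  have hd2 : (d : ℝ) - 2 ≠ 0 := by linarith
  have hd2' : 2 - (d : ℝ) ≠ 0 := by linarith
  rw [hexp]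
  field_simp
  ring

/-- Behavior at `-∞` of the second solution `Ξ`, normalized by the Wronskian relation,
of a second-order linear equation whose first solution `γ` decays like `e^t`. -/
theorem stmt_12 (d : ℤ) (hd : 5 ≤ d) (Q : ℝ → ℝ) (hQc : Continuous Q)
    (hQ : (fun t : ℝ => Q t - (3 - (d : ℝ))) =O[atBot] fun t : ℝ => Real.exp (2 * t))
    (γ : ℝ → ℝ) (hγC : ContDiff ℝ 2 γ)
    (hγeq : ∀ t : ℝ, deriv (deriv γ) t + ((d : ℝ) - 4) * deriv γ t + Q t * γ t = 0)
    (hγasym : (fun t : ℝ => γ t - Real.exp t) =O[atBot] fun t : ℝ => Real.exp (3 * t))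
    (hγ'asym : (fun t : ℝ => deriv γ t - Real.exp t) =O[atBot] fun t : ℝ => Real.exp (3 * t))
    (Ξ : ℝ → ℝ) (hΞC : ContDiff ℝ 2 Ξ)
    (hΞeq : ∀ t : ℝ, deriv (deriv Ξ) t + ((d : ℝ) - 4) * deriv Ξ t + Q t * Ξ t = 0)
    (hW : ∀ t : ℝ, γ t * deriv Ξ t - deriv γ t * Ξ t = Real.exp ((4 - (d : ℝ)) * t)) :
    (fun t : ℝ => Ξ t - (2 - (d : ℝ))⁻¹ * Real.exp ((3 - (d : ℝ)) * t))
      =O[atBot] fun t : ℝ => Real.exp ((5 - (d : ℝ)) * t) :=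
  stmt_12_general d hd γ hγC hγasym Ξ hΞC hW
end
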